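/- arXiv:1703.00714 — 2 statements merged into one kernel-verified Lean document; each statement's English description precedes it below -/
import Mathlib

section
/- If Z = βI − Σ_{k=1}^{s} λ_k g_k g_k† with β > 0, λ_k ≥ 0, and g_k ∈ ℂ^r, and W is positive semidefinite with W Z = 0, then rank(W) ≤ min(s, r). -/
open Matrix ComplexOrder

/-
From `W Z = 0` we get `β W = W (Σ_k λ_k g_k g_kᴴ)`, so `W = W M` with `M` a sum of `s` rank-one
matrices. Hence the column space of `W` lies in that of `M`, and `rank W ≤ rank M ≤ s`.
-/

namespace Matrix

variable {ι m n R : Type*} [Fintype ι] [CommSemiring R]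

theorem sum_vecMulVec_eq_mul (u : ι → m → R) (v : ι → n → R) :
    ∑ k, vecMulVec (u k) (v k) = (of fun i k => u k i) * of v := by
  ext i j
  simp [mul_apply, vecMulVec_apply, sum_apply]

theorem rank_sum_vecMulVec_le [StrongRankCondition R] [Fintype n] (u : ι → m → R)
    (v : ι → n → R) : (∑ k, vecMulVec (u k) (v k)).rank ≤ Fintype.card ι := by
  rw [sum_vecMulVec_eq_mul]
  exact (rank_mul_le_left _ _).trans (rank_le_card_width _)

end Matrix

theorem stmt8_general {r s : ℕ} (β : ℝ) (hβ : 0 < β) (lam : Fin s → ℝ)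
    (g : Fin s → (Fin r → ℂ)) (W : Matrix (Fin r) (Fin r) ℂ)
    (hWZ : W * ((β : ℂ) • (1 : Matrix (Fin r) (Fin r) ℂ) -
        ∑ k, (lam k : ℂ) • vecMulVec (g k) (star (g k))) = 0) :
    W.rank ≤ min s r := by
  have hβ' : (β : ℂ) ≠ 0 := by exact_mod_cast hβ.ne'
  set M := ∑ k, vecMulVec (((β : ℂ)⁻¹ * lam k) • g k) (star (g k))
  have hWM : W = W * M := by
    rw [Matrix.mul_sub, sub_eq_zero, Matrix.mul_smul, Matrix.mul_one] at hWZ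
    have hM : M = (β : ℂ)⁻¹ • ∑ k, (lam k : ℂ) • vecMulVec (g k) (star (g k)) := by
      simp only [M, Finset.smul_sum, smul_smul, smul_vecMulVec]
    rw [hM, Matrix.mul_smul, ← hWZ, smul_smul, inv_mul_cancel₀ hβ', one_smul]
  have hs : W.rank ≤ s := calc
    W.rank = (W * M).rank := congrArg rank hWM
    _ ≤ M.rank := rank_mul_le_right _ _
    _ ≤ s := (rank_sum_vecMulVec_le _ _).trans_eq (Fintype.card_fin s)
  exact le_min hs (W.rank_le_card_width.trans_eq (Fintype.card_fin r))

/-- If `Z = β I − Σ_k λ_k g_k g_k†` with `β > 0`, `λ_k ≥ 0`, and `W` is positive semidefinite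
with `W Z = 0`, then `rank W ≤ min s r`. -/
theorem stmt8 {r s : ℕ} (β : ℝ) (hβ : 0 < β) (lam : Fin s → ℝ) (hlam : ∀ k, 0 ≤ lam k)
    (g : Fin s → (Fin r → ℂ)) (W : Matrix (Fin r) (Fin r) ℂ) (hW : W.PosSemidef)
    (hWZ : W * ((β : ℂ) • (1 : Matrix (Fin r) (Fin r) ℂ) -
        ∑ k, (lam k : ℂ) • vecMulVec (g k) (star (g k))) = 0) :
    W.rank ≤ min s r :=
  stmt8_general β hβ lam g W hWZ
end

section
/- Let Y = −ff† + M where M is positive definite Hermitian and f ∈ ℂ^n. If Y is positive semidefinite, then rank(Y) ≥ n − 1; moreover, if Q is positive semidefinite, Q ≠ 0, and QY = 0, then rank(Y) = n − 1 and rank(Q) = 1. -/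
open Matrix ComplexOrder

private lemma aux_rank_add_le {n : ℕ} (A B : Matrix (Fin n) (Fin n) ℂ) :
    (A + B).rank ≤ A.rank + B.rank := by
  classical
  have h : LinearMap.range (A + B).mulVecLin ≤
      LinearMap.range A.mulVecLin ⊔ LinearMap.range B.mulVecLin := by
    rintro x ⟨v, rfl⟩
    rw [Matrix.mulVecLin_add]
    exact Submodule.mem_sup.2 ⟨_, ⟨v, rfl⟩, _, ⟨v, rfl⟩, rfl⟩
  calc (A + B).rank ≤ Module.finrank ℂ
        ↥(LinearMap.range A.mulVecLin ⊔ LinearMap.range B.mulVecLin) :=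
        Submodule.finrank_mono h
    _ ≤ A.rank + B.rank := by
        have := Submodule.finrank_sup_add_finrank_inf_eq
          (LinearMap.range A.mulVecLin) (LinearMap.range B.mulVecLin)
        unfold Matrix.rank
        omega

private lemma aux_rank_pos {n : ℕ} {Q : Matrix (Fin n) (Fin n) ℂ} (hQ : Q ≠ 0) :
    1 ≤ Q.rank := by
  classical
  rw [Nat.one_le_iff_ne_zero]
  intro h0
  apply hQ
  have hrange : LinearMap.range Q.mulVecLin = ⊥ :=
    Submodule.finrank_eq_zero.mp h0
  have hlin : Q.mulVecLin = 0 := LinearMap.range_eq_bot.mp hrange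
  -- `mulVecLin` agrees with `toLin'`, which is injective
  have : Matrix.toLin' Q = 0 := by
    ext v i
    simp [Matrix.toLin'_apply, ← Matrix.mulVecLin_apply, hlin]
  exact (LinearEquiv.map_eq_zero_iff Matrix.toLin').mp this

private lemma aux_rank_vecMulVec_le {n : ℕ} (w v : Fin n → ℂ) :
    (vecMulVec w v).rank ≤ 1 := by
  classical
  rw [Matrix.vecMulVec_eq Unit w v]
  calc (Matrix.replicateCol Unit w * Matrix.replicateRow Unit v).rank
      ≤ (Matrix.replicateRow Unit v).rank := Matrix.rank_mul_le_right _ _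
    _ ≤ Fintype.card Unit := Matrix.rank_le_card_height _
    _ = 1 := by simp

/-- Let `Y = M − f f†` with `M` positive definite Hermitian. If `Y` is positive semidefinite
then `rank Y ≥ n − 1`; moreover, for any positive semidefinite `Q ≠ 0` with `Q Y = 0`,
`rank Y = n − 1` and `rank Q = 1`. -/
theorem stmt9 {n : ℕ} (f : Fin n → ℂ) (M : Matrix (Fin n) (Fin n) ℂ) (hM : M.PosDef)
    (Y : Matrix (Fin n) (Fin n) ℂ) (hYdef : Y = M - vecMulVec f (star f))
    (hY : Y.PosSemidef) :
    n - 1 ≤ Y.rank ∧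
    ∀ Q : Matrix (Fin n) (Fin n) ℂ, Q.PosSemidef → Q ≠ 0 → Q * Y = 0 →
      Y.rank = n - 1 ∧ Q.rank = 1 := by
  classical
  have hMrank : M.rank = n := by
    rw [Matrix.rank_of_isUnit M hM.isUnit, Fintype.card_fin]
  have hMeq : M = Y + vecMulVec f (star f) := by
    rw [hYdef, sub_add_cancel]
  have hle : n ≤ Y.rank + 1 := by
    calc n = M.rank := hMrank.symm
      _ = (Y + vecMulVec f (star f)).rank := by rw [← hMeq]
      _ ≤ Y.rank + (vecMulVec f (star f)).rank := aux_rank_add_le _ _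
      _ ≤ Y.rank + 1 := by
          exact Nat.add_le_add_left (aux_rank_vecMulVec_le f (star f)) _
  refine ⟨by omega, fun Q hQpsd hQne hQY => ?_⟩
  have hQpos : 1 ≤ Q.rank := aux_rank_pos hQne
  have hsum : Q.rank + Y.rank ≤ Fintype.card (Fin n) :=
    Matrix.rank_add_rank_le_card_of_mul_eq_zero hQY
  rw [Fintype.card_fin] at hsum
  omega
end
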